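/- arXiv:2509.16573 — 2 statements merged into one kernel-verified Lean document; each statement's English description precedes it below -/
import Mathlib

section
/- Suppose c : ℤ×ℤ → {1,...,39} satisfies: distinct vertices of color 1 are at Chebyshev distance ≥ 2, no two vertices of color 1 are at positions differing by (2,0), (0,2), (3,0), (0,3), (2,1), (1,2), (2,-1) or (1,-2), and any 2×2 block contains at most one color-1 vertex. Then any 7×7 block whose central vertex has color 1 contains at most 9 vertices of color 1. -/
/-- Chebyshev distance on the integer grid (graph distance in the king graph). -/
def cheb (u v : ℤ × ℤ) : ℤ := max |u.1 - v.1| |u.2 - v.2|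

/-- An S-packing coloring of the infinite king graph with 39 colors, S = (1,6,6,...):
colors in {1,...,39}; distinct color-1 vertices at distance ≥ 2; distinct vertices
sharing a color i ≥ 2 at distance ≥ 7. -/
def IsPacking (c : ℤ × ℤ → ℕ) : Prop :=
  (∀ v, 1 ≤ c v ∧ c v ≤ 39) ∧
  (∀ u v : ℤ × ℤ, u ≠ v → c u = 1 → c v = 1 → 2 ≤ cheb u v) ∧
  (∀ u v : ℤ × ℤ, u ≠ v → 2 ≤ c u → c u = c v → 7 ≤ cheb u v)

/-- The w×h block of grid points {a,...,a+w-1} × {b,...,b+h-1} given via closed Icc. -/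
noncomputable def blk (a b a' b' : ℤ) : Finset (ℤ × ℤ) := (Finset.Icc a a') ×ˢ (Finset.Icc b b')

/-- Auxiliary: transfer a forbidden displacement pattern to arbitrary pairs of
color-1 vertices, phrased in terms of the displacement components. -/
lemma pair_excl2 (c : ℤ × ℤ → ℕ) (p q : ℤ)
    (h : ∀ x y : ℤ, ¬ (c (x, y) = 1 ∧ c (x + p, y + q) = 1))
    (u v : ℤ × ℤ) (hu : c u = 1) (hv : c v = 1) (dx dy : ℤ)
    (hdx : v.1 = u.1 + dx) (hdy : v.2 = u.2 + dy) :
    ¬ (dx = p ∧ dy = q) := by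
  rintro ⟨rfl, rfl⟩
  obtain ⟨ux, uy⟩ := u
  refine h ux uy ⟨hu, ?_⟩
  have hveq : (ux + dx, uy + dy) = v := by
    rw [Prod.ext_iff]; exact ⟨hdx.symm, hdy.symm⟩
  rw [hveq]; exact hv

/-- Auxiliary: purely arithmetic form of the cover of a 7×7 block by nine classes. -/
lemma cover_arith (dx dy : ℤ)
    (E1 : ¬(dx = 2 ∧ dy = 0)) (E1' : ¬(-dx = 2 ∧ -dy = 0))
    (E2 : ¬(dx = 0 ∧ dy = 2)) (E2' : ¬(-dx = 0 ∧ -dy = 2))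
    (E3 : ¬(dx = 3 ∧ dy = 0)) (E3' : ¬(-dx = 3 ∧ -dy = 0))
    (E4 : ¬(dx = 0 ∧ dy = 3)) (E4' : ¬(-dx = 0 ∧ -dy = 3))
    (E5 : ¬(dx = 2 ∧ dy = 1)) (E5' : ¬(-dx = 2 ∧ -dy = 1))
    (E6 : ¬(dx = 1 ∧ dy = 2)) (E6' : ¬(-dx = 1 ∧ -dy = 2))
    (E7 : ¬(dx = 2 ∧ dy = -1)) (E7' : ¬(-dx = 2 ∧ -dy = -1))
    (E8 : ¬(dx = 1 ∧ dy = -2)) (E8' : ¬(-dx = 1 ∧ -dy = -2))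
    (hD : (dx = 0 ∧ dy = 0) ∨ 2 ≤ dx ∨ dx ≤ -2 ∨ 2 ≤ dy ∨ dy ≤ -2)
    (hb1 : -3 ≤ dx) (hb2 : dx ≤ 3) (hb3 : -3 ≤ dy) (hb4 : dy ≤ 3) :
    ((dx = 0 ∧ dy = 0) ∨
     ((dx = 1 ∧ dy = 3) ∨ (dx = 2 ∧ dy = 2) ∨ (dx = 2 ∧ dy = 3)) ∨
     ((dx = 3 ∧ dy = 1) ∨ (dx = 3 ∧ dy = 2) ∨ (dx = 3 ∧ dy = 3)) ∨
     ((dx = -1 ∧ dy = 3) ∨ (dx = -2 ∧ dy = 2) ∨ (dx = -2 ∧ dy = 3)) ∨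
     ((dx = -3 ∧ dy = 1) ∨ (dx = -3 ∧ dy = 2) ∨ (dx = -3 ∧ dy = 3)) ∨
     ((dx = -1 ∧ dy = -3) ∨ (dx = -2 ∧ dy = -2) ∨ (dx = -2 ∧ dy = -3)) ∨
     ((dx = -3 ∧ dy = -3) ∨ (dx = -3 ∧ dy = -2) ∨ (dx = -3 ∧ dy = -1)) ∨
     ((dx = 1 ∧ dy = -3) ∨ (dx = 2 ∧ dy = -2) ∨ (dx = 2 ∧ dy = -3)) ∨
     ((dx = 3 ∧ dy = -3) ∨ (dx = 3 ∧ dy = -2) ∨ (dx = 3 ∧ dy = -1))) := by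
  have hdx : dx = -3 ∨ dx = -2 ∨ dx = -1 ∨ dx = 0 ∨ dx = 1 ∨ dx = 2 ∨ dx = 3 := by omega
  have hdy : dy = -3 ∨ dy = -2 ∨ dy = -1 ∨ dy = 0 ∨ dy = 1 ∨ dy = 2 ∨ dy = 3 := by omega
  clear hb1 hb2 hb3 hb4
  rcases hdx with rfl|rfl|rfl|rfl|rfl|rfl|rfl <;>
    rcases hdy with rfl|rfl|rfl|rfl|rfl|rfl|rfl <;>
    first
      | decide
      | exact absurd (by decide) E1 | exact absurd (by decide) E1'
      | exact absurd (by decide) E2 | exact absurd (by decide) E2'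
      | exact absurd (by decide) E3 | exact absurd (by decide) E3'
      | exact absurd (by decide) E4 | exact absurd (by decide) E4'
      | exact absurd (by decide) E5 | exact absurd (by decide) E5'
      | exact absurd (by decide) E6 | exact absurd (by decide) E6'
      | exact absurd (by decide) E7 | exact absurd (by decide) E7'
      | exact absurd (by decide) E8 | exact absurd (by decide) E8'
      | exact absurd hD (by decide)

theorem stmt15 (c : ℤ × ℤ → ℕ)
    (hrange : ∀ v, 1 ≤ c v ∧ c v ≤ 39)
    (hdist : ∀ u v : ℤ × ℤ, u ≠ v → c u = 1 → c v = 1 → 2 ≤ cheb u v)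
    (h20 : ∀ x y : ℤ, ¬ (c (x, y) = 1 ∧ c (x + 2, y) = 1))
    (h02 : ∀ x y : ℤ, ¬ (c (x, y) = 1 ∧ c (x, y + 2) = 1))
    (h30 : ∀ x y : ℤ, ¬ (c (x, y) = 1 ∧ c (x + 3, y) = 1))
    (h03 : ∀ x y : ℤ, ¬ (c (x, y) = 1 ∧ c (x, y + 3) = 1))
    (h21 : ∀ x y : ℤ, ¬ (c (x, y) = 1 ∧ c (x + 2, y + 1) = 1))
    (h12 : ∀ x y : ℤ, ¬ (c (x, y) = 1 ∧ c (x + 1, y + 2) = 1))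
    (h21' : ∀ x y : ℤ, ¬ (c (x, y) = 1 ∧ c (x + 2, y - 1) = 1))
    (h12' : ∀ x y : ℤ, ¬ (c (x, y) = 1 ∧ c (x + 1, y - 2) = 1))
    (h22 : ∀ a b : ℤ, ((blk a b (a+1) (b+1)).filter (fun p => c p = 1)).card ≤ 1)
    (a b : ℤ) (hab : c (a, b) = 1) :
    ((blk (a-3) (b-3) (a+3) (b+3)).filter (fun p => c p = 1)).card ≤ 9 := by
  have h20n : ∀ x y : ℤ, ¬ (c (x, y) = 1 ∧ c (x + 2, y + 0) = 1) := by
    intro x y; simpa using h20 x y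
  have h02n : ∀ x y : ℤ, ¬ (c (x, y) = 1 ∧ c (x + 0, y + 2) = 1) := by
    intro x y; simpa using h02 x y
  have h30n : ∀ x y : ℤ, ¬ (c (x, y) = 1 ∧ c (x + 3, y + 0) = 1) := by
    intro x y; simpa using h30 x y
  have h03n : ∀ x y : ℤ, ¬ (c (x, y) = 1 ∧ c (x + 0, y + 3) = 1) := by
    intro x y; simpa using h03 x y
  have h21n : ∀ x y : ℤ, ¬ (c (x, y) = 1 ∧ c (x + 2, y + (-1)) = 1) := by
    intro x y; simpa [sub_eq_add_neg] using h21' x y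
  have h12n : ∀ x y : ℤ, ¬ (c (x, y) = 1 ∧ c (x + 1, y + (-2)) = 1) := by
    intro x y; simpa [sub_eq_add_neg] using h12' x y
  -- distance disjunction between any two color-1 vertices
  have hDD : ∀ u v : ℤ × ℤ, c u = 1 → c v = 1 →
      (u.1 = v.1 ∧ u.2 = v.2) ∨ 2 ≤ u.1 - v.1 ∨ u.1 - v.1 ≤ -2 ∨
        2 ≤ u.2 - v.2 ∨ u.2 - v.2 ≤ -2 := by
    intro u v hu hv
    rcases eq_or_ne u v with h | h
    · left; rw [h]; exact ⟨rfl, rfl⟩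
    · right
      have := hdist u v h hu hv
      simp only [cheb, le_max_iff, le_abs] at this
      omega
  -- two color-1 vertices in the same column at vertical distance ≤ 2 coincide
  have keyV : ∀ u v : ℤ × ℤ, c u = 1 → c v = 1 → u.1 = v.1 →
      u.2 - v.2 ≤ 2 → v.2 - u.2 ≤ 2 → u = v := by
    intro u v hu hv h1 h2 h3
    have hD := hDD u v hu hv
    have Euv := pair_excl2 c 0 2 h02n u v hu hv (v.1 - u.1) (v.2 - u.2)
      (by ring) (by ring)
    have Evu := pair_excl2 c 0 2 h02n v u hv hu (u.1 - v.1) (u.2 - v.2)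
      (by ring) (by ring)
    rw [Prod.ext_iff]; omega
  -- a column of three cells contains at most one color-1 vertex
  have cardCol : ∀ x y1 y2 y3 : ℤ, y2 - y1 ≤ 2 → y3 - y1 ≤ 2 → y1 - y2 ≤ 2 →
      y1 - y3 ≤ 2 → y3 - y2 ≤ 2 → y2 - y3 ≤ 2 →
      ((({(x, y1), (x, y2), (x, y3)} : Finset (ℤ × ℤ))).filter
        (fun p => c p = 1)).card ≤ 1 := by
    intro x y1 y2 y3 d1 d2 d3 d4 d5 d6
    rw [Finset.card_le_one]
    intro u hu v hv
    simp only [Finset.mem_filter, Finset.mem_insert, Finset.mem_singleton] at hu hv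
    obtain ⟨hu1, hu2⟩ := hu; obtain ⟨hv1, hv2⟩ := hv
    rcases hu1 with rfl|rfl|rfl <;> rcases hv1 with rfl|rfl|rfl <;>
      first
        | rfl
        | exact keyV _ _ hu2 hv2 rfl (by omega) (by omega)
  -- any set inside a 2×2 block contains at most one color-1 vertex
  have cardA : ∀ (x y : ℤ) (T : Finset (ℤ × ℤ)), T ⊆ blk x y (x+1) (y+1) →
      (T.filter (fun p => c p = 1)).card ≤ 1 := fun x y T hT =>
    le_trans (Finset.card_le_card (Finset.filter_subset_filter _ hT)) (h22 x y)
  have sA1 : ({(a+1,b+3),(a+2,b+2),(a+2,b+3)} : Finset (ℤ × ℤ)) ⊆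
      blk (a+1) (b+2) (a+1+1) (b+2+1) := by
    intro p hp
    simp only [Finset.mem_insert, Finset.mem_singleton] at hp
    simp only [blk, Finset.mem_product, Finset.mem_Icc]
    rcases hp with rfl|rfl|rfl <;> exact ⟨⟨by omega, by omega⟩, by omega, by omega⟩
  have sA2 : ({(a + -1,b+3),(a + -2,b+2),(a + -2,b+3)} : Finset (ℤ × ℤ)) ⊆
      blk (a-2) (b+2) (a-2+1) (b+2+1) := by
    intro p hp
    simp only [Finset.mem_insert, Finset.mem_singleton] at hp
    simp only [blk, Finset.mem_product, Finset.mem_Icc]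
    rcases hp with rfl|rfl|rfl <;> exact ⟨⟨by omega, by omega⟩, by omega, by omega⟩
  have sA3 : ({(a + -1,b + -3),(a + -2,b + -2),(a + -2,b + -3)} : Finset (ℤ × ℤ)) ⊆
      blk (a-2) (b-3) (a-2+1) (b-3+1) := by
    intro p hp
    simp only [Finset.mem_insert, Finset.mem_singleton] at hp
    simp only [blk, Finset.mem_product, Finset.mem_Icc]
    rcases hp with rfl|rfl|rfl <;> exact ⟨⟨by omega, by omega⟩, by omega, by omega⟩
  have sA4 : ({(a+1,b + -3),(a+2,b + -2),(a+2,b + -3)} : Finset (ℤ × ℤ)) ⊆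
      blk (a+1) (b-3) (a+1+1) (b-3+1) := by
    intro p hp
    simp only [Finset.mem_insert, Finset.mem_singleton] at hp
    simp only [blk, Finset.mem_product, Finset.mem_Icc]
    rcases hp with rfl|rfl|rfl <;> exact ⟨⟨by omega, by omega⟩, by omega, by omega⟩
  -- the covering set
  have hsub : (blk (a-3) (b-3) (a+3) (b+3)).filter (fun p => c p = 1) ⊆
      ((({(a + 0, b + 0)} : Finset (ℤ × ℤ)) ∪
        (({(a+1,b+3),(a+2,b+2),(a+2,b+3)} : Finset (ℤ × ℤ)) ∪
        (({(a+3,b+1),(a+3,b+2),(a+3,b+3)} : Finset (ℤ × ℤ)) ∪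
        (({(a + -1,b+3),(a + -2,b+2),(a + -2,b+3)} : Finset (ℤ × ℤ)) ∪
        (({(a + -3,b+1),(a + -3,b+2),(a + -3,b+3)} : Finset (ℤ × ℤ)) ∪
        (({(a + -1,b + -3),(a + -2,b + -2),(a + -2,b + -3)} : Finset (ℤ × ℤ)) ∪
        (({(a + -3,b + -3),(a + -3,b + -2),(a + -3,b + -1)} : Finset (ℤ × ℤ)) ∪
        (({(a+1,b + -3),(a+2,b + -2),(a+2,b + -3)} : Finset (ℤ × ℤ)) ∪
         ({(a+3,b + -3),(a+3,b + -2),(a+3,b + -1)} : Finset (ℤ × ℤ))))))))))).filter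
        (fun p => c p = 1) := by
    intro p hp
    simp only [Finset.mem_filter, blk, Finset.mem_product, Finset.mem_Icc] at hp
    obtain ⟨⟨⟨hx1, hx2⟩, hy1, hy2⟩, hc⟩ := hp
    obtain ⟨px, py⟩ := p
    obtain ⟨dx, rfl⟩ : ∃ dx, px = a + dx := ⟨px - a, by ring⟩
    obtain ⟨dy, rfl⟩ : ∃ dy, py = b + dy := ⟨py - b, by ring⟩
    have hb1 : -3 ≤ dx := by omega
    have hb2 : dx ≤ 3 := by omega
    have hb3 : -3 ≤ dy := by omega
    have hb4 : dy ≤ 3 := by omega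
    have hDp := hDD (a, b) (a + dx, b + dy) hab hc
    have hD : (dx = 0 ∧ dy = 0) ∨ 2 ≤ dx ∨ dx ≤ -2 ∨ 2 ≤ dy ∨ dy ≤ -2 := by
      clear hx1 hx2 hy1 hy2; omega
    clear hDp
    have hfwd : ((a+dx, b+dy) : ℤ × ℤ).1 = ((a,b) : ℤ × ℤ).1 + dx := rfl
    have hfwd' : ((a+dx, b+dy) : ℤ × ℤ).2 = ((a,b) : ℤ × ℤ).2 + dy := rfl
    have hbwd : ((a,b) : ℤ × ℤ).1 = ((a+dx, b+dy) : ℤ × ℤ).1 + (-dx) := by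
      show a = a + dx + (-dx); ring
    have hbwd' : ((a,b) : ℤ × ℤ).2 = ((a+dx, b+dy) : ℤ × ℤ).2 + (-dy) := by
      show b = b + dy + (-dy); ring
    have hcov := cover_arith dx dy
      (pair_excl2 c 2 0 h20n (a,b) (a+dx,b+dy) hab hc dx dy hfwd hfwd')
      (pair_excl2 c 2 0 h20n (a+dx,b+dy) (a,b) hc hab (-dx) (-dy) hbwd hbwd')
      (pair_excl2 c 0 2 h02n (a,b) (a+dx,b+dy) hab hc dx dy hfwd hfwd')
      (pair_excl2 c 0 2 h02n (a+dx,b+dy) (a,b) hc hab (-dx) (-dy) hbwd hbwd')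
      (pair_excl2 c 3 0 h30n (a,b) (a+dx,b+dy) hab hc dx dy hfwd hfwd')
      (pair_excl2 c 3 0 h30n (a+dx,b+dy) (a,b) hc hab (-dx) (-dy) hbwd hbwd')
      (pair_excl2 c 0 3 h03n (a,b) (a+dx,b+dy) hab hc dx dy hfwd hfwd')
      (pair_excl2 c 0 3 h03n (a+dx,b+dy) (a,b) hc hab (-dx) (-dy) hbwd hbwd')
      (pair_excl2 c 2 1 h21 (a,b) (a+dx,b+dy) hab hc dx dy hfwd hfwd')
      (pair_excl2 c 2 1 h21 (a+dx,b+dy) (a,b) hc hab (-dx) (-dy) hbwd hbwd')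
      (pair_excl2 c 1 2 h12 (a,b) (a+dx,b+dy) hab hc dx dy hfwd hfwd')
      (pair_excl2 c 1 2 h12 (a+dx,b+dy) (a,b) hc hab (-dx) (-dy) hbwd hbwd')
      (pair_excl2 c 2 (-1) h21n (a,b) (a+dx,b+dy) hab hc dx dy hfwd hfwd')
      (pair_excl2 c 2 (-1) h21n (a+dx,b+dy) (a,b) hc hab (-dx) (-dy) hbwd hbwd')
      (pair_excl2 c 1 (-2) h12n (a,b) (a+dx,b+dy) hab hc dx dy hfwd hfwd')
      (pair_excl2 c 1 (-2) h12n (a+dx,b+dy) (a,b) hc hab (-dx) (-dy) hbwd hbwd')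
      hD hb1 hb2 hb3 hb4
    clear hD hfwd hfwd' hbwd hbwd' hx1 hx2 hy1 hy2 hb1 hb2 hb3 hb4
    simp only [Finset.mem_filter]
    refine ⟨?_, hc⟩
    rcases hcov with ⟨rfl,rfl⟩|(⟨rfl,rfl⟩|⟨rfl,rfl⟩|⟨rfl,rfl⟩)|(⟨rfl,rfl⟩|⟨rfl,rfl⟩|⟨rfl,rfl⟩)|(⟨rfl,rfl⟩|⟨rfl,rfl⟩|⟨rfl,rfl⟩)|(⟨rfl,rfl⟩|⟨rfl,rfl⟩|⟨rfl,rfl⟩)|(⟨rfl,rfl⟩|⟨rfl,rfl⟩|⟨rfl,rfl⟩)|(⟨rfl,rfl⟩|⟨rfl,rfl⟩|⟨rfl,rfl⟩)|(⟨rfl,rfl⟩|⟨rfl,rfl⟩|⟨rfl,rfl⟩)|(⟨rfl,rfl⟩|⟨rfl,rfl⟩|⟨rfl,rfl⟩) <;>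
      simp only [Finset.mem_union, Finset.mem_insert, Finset.mem_singleton,
        Prod.mk.injEq, eq_self_iff_true, and_self, and_true, true_and, or_true, true_or]
  -- combine the nine pieces
  have step : ∀ (s t : Finset (ℤ × ℤ)) (m n : ℕ),
      (s.filter (fun p => c p = 1)).card ≤ m →
      (t.filter (fun p => c p = 1)).card ≤ n →
      ((s ∪ t).filter (fun p => c p = 1)).card ≤ m + n := by
    intro s t m n hs ht
    rw [Finset.filter_union]
    exact le_trans (Finset.card_union_le _ _) (by omega)
  have c0 : ((({(a + 0, b + 0)} : Finset (ℤ × ℤ))).filter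
      (fun p => c p = 1)).card ≤ 1 :=
    le_trans (Finset.card_filter_le _ _) (by simp)
  refine le_trans (Finset.card_le_card hsub) ?_
  have : (1 : ℕ) + (1 + (1 + (1 + (1 + (1 + (1 + (1 + 1))))))) = 9 := by norm_num
  rw [← this]
  exact step _ _ 1 (1 + (1 + (1 + (1 + (1 + (1 + (1 + 1))))))) c0
    (step _ _ 1 (1 + (1 + (1 + (1 + (1 + (1 + 1)))))) (cardA _ _ _ sA1)
    (step _ _ 1 (1 + (1 + (1 + (1 + (1 + 1))))) (cardCol (a+3) (b+1) (b+2) (b+3) (by omega) (by omega) (by omega) (by omega) (by omega) (by omega))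
    (step _ _ 1 (1 + (1 + (1 + (1 + 1)))) (cardA _ _ _ sA2)
    (step _ _ 1 (1 + (1 + (1 + 1))) (cardCol (a + -3) (b+1) (b+2) (b+3) (by omega) (by omega) (by omega) (by omega) (by omega) (by omega))
    (step _ _ 1 (1 + (1 + 1)) (cardA _ _ _ sA3)
    (step _ _ 1 (1 + 1) (cardCol (a + -3) (b + -3) (b + -2) (b + -1) (by omega) (by omega) (by omega) (by omega) (by omega) (by omega))
    (step _ _ 1 1 (cardA _ _ _ sA4) (cardCol (a+3) (b + -3) (b + -2) (b + -1) (by omega) (by omega) (by omega) (by omega) (by omega) (by omega)))))))))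
end

section
/- Let c be an S-packing coloring of the infinite king graph with 39 colors (S=(1,6,6,...)). Suppose the 7×7 block G = {a,...,a+6}×{b,...,b+6} contains exactly 12 vertices of color 1 and the shifted block G(1,0) = {a+1,...,a+7}×{b,...,b+6} contains exactly 11 vertices of color 1. Then there is a unique color k with 2 ≤ k ≤ 39 not appearing in G, and moreover k appears on some vertex of the rightmost column {a+7}×{b,...,b+6} of G(1,0). -/
lemma mem_blk' {a b a' b' : ℤ} {p : ℤ × ℤ} :
    p ∈ blk a b a' b' ↔ (a ≤ p.1 ∧ p.1 ≤ a') ∧ (b ≤ p.2 ∧ p.2 ≤ b') := by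
  simp [blk, Finset.mem_Icc]

lemma card_blk7 (a b a' b' : ℤ) (ha : a' = a+6) (hb : b' = b+6) :
    (blk a b a' b').card = 49 := by
  subst ha hb
  rw [blk, Finset.card_product, Int.card_Icc, Int.card_Icc]
  have h1 : a+6+1-a = 7 := by ring
  have h2 : b+6+1-b = 7 := by ring
  rw [h1, h2]
  rfl

lemma injOn_blk (c : ℤ × ℤ → ℕ) (hc : IsPacking c) (a b a' b' : ℤ)
    (ha : a' = a+6) (hb : b' = b+6) :
    Set.InjOn c ((blk a b a' b').filter (fun p => c p ≠ 1) : Finset (ℤ × ℤ)) := by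
  subst ha hb
  intro u hu v hv hcv
  by_contra hne
  simp only [Finset.coe_filter, Set.mem_setOf_eq, mem_blk'] at hu hv
  obtain ⟨hc1, _, hc3⟩ := hc
  have h2 : 2 ≤ c u := by have := (hc1 u).1; omega
  have h7 := hc3 u v hne h2 hcv
  have hx : |u.1 - v.1| ≤ 6 := abs_le.mpr ⟨by omega, by omega⟩
  have hy : |u.2 - v.2| ≤ 6 := abs_le.mpr ⟨by omega, by omega⟩
  have : cheb u v ≤ 6 := max_le hx hy
  omega

lemma nonone_card (c : ℤ × ℤ → ℕ) (a b a' b' : ℤ) (ha : a' = a+6) (hb : b' = b+6) (m : ℕ)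
    (h : ((blk a b a' b').filter (fun p => c p = 1)).card = m) :
    ((blk a b a' b').filter (fun p => c p ≠ 1)).card = 49 - m := by
  have key : ((blk a b a' b').filter (fun p => c p = 1)).card
      + ((blk a b a' b').filter (fun p => ¬ c p = 1)).card = (blk a b a' b').card :=
    Finset.card_filter_add_card_filter_not (fun p => c p = 1)
  rw [card_blk7 a b a' b' ha hb, h] at key
  simp only [ne_eq]
  omega

theorem stmt17 (c : ℤ × ℤ → ℕ) (hc : IsPacking c) (a b : ℤ)
    (h12 : ((blk a b (a+6) (b+6)).filter (fun p => c p = 1)).card = 12)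
    (h11 : ((blk (a+1) b (a+7) (b+6)).filter (fun p => c p = 1)).card = 11) :
    ∃ k : ℕ, (2 ≤ k ∧ k ≤ 39 ∧ (∀ p ∈ blk a b (a+6) (b+6), c p ≠ k) ∧
        (∃ y ∈ Finset.Icc b (b+6), c (a+7, y) = k)) ∧
      ∀ k' : ℕ, 2 ≤ k' → k' ≤ 39 → (∀ p ∈ blk a b (a+6) (b+6), c p ≠ k') →
        k' = k := by
  obtain ⟨hc1, hc2, hc3⟩ := hc
  set B := blk a b (a+6) (b+6) with hB
  set B' := blk (a+1) b (a+7) (b+6) with hB'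
  set N := B.filter (fun p => c p ≠ 1) with hN
  set N' := B'.filter (fun p => c p ≠ 1) with hN'
  have hNcard : N.card = 37 := by
    have := nonone_card c a b (a+6) (b+6) rfl rfl 12 h12; simpa using this
  have hN'card : N'.card = 38 := by
    have := nonone_card c (a+1) b (a+7) (b+6) (by ring) rfl 11 h11; simpa using this
  -- images
  set I := N.image c with hI
  set I' := N'.image c with hI'
  have hIsub : I ⊆ Finset.Icc 2 39 := by
    intro k hk
    rw [hI] at hk
    obtain ⟨p, hp, hpk⟩ := Finset.mem_image.mp hk
    rw [hN] at hp
    obtain ⟨_, hne1⟩ := Finset.mem_filter.mp hp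
    have := hc1 p
    rw [Finset.mem_Icc]; omega
  have hI'sub : I' ⊆ Finset.Icc 2 39 := by
    intro k hk
    rw [hI'] at hk
    obtain ⟨p, hp, hpk⟩ := Finset.mem_image.mp hk
    rw [hN'] at hp
    obtain ⟨_, hne1⟩ := Finset.mem_filter.mp hp
    have := hc1 p
    rw [Finset.mem_Icc]; omega
  have hIcard : I.card = 37 := by
    rw [hI, Finset.card_image_of_injOn
      (injOn_blk c ⟨hc1, hc2, hc3⟩ a b (a+6) (b+6) rfl rfl), hNcard]
  have hI'card : I'.card = 38 := by
    rw [hI', Finset.card_image_of_injOn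
      (injOn_blk c ⟨hc1, hc2, hc3⟩ (a+1) b (a+7) (b+6) (by ring) rfl), hN'card]
  have hIccCard : (Finset.Icc 2 39).card = 38 := by decide
  have hI'eq : I' = Finset.Icc 2 39 :=
    Finset.eq_of_subset_of_card_le hI'sub (by omega)
  have hMcard : (Finset.Icc 2 39 \ I).card = 1 := by
    rw [Finset.card_sdiff_of_subset hIsub]; omega
  obtain ⟨k, hk⟩ := Finset.card_eq_one.mp hMcard
  have hkmem : k ∈ Finset.Icc 2 39 \ I := by rw [hk]; exact Finset.mem_singleton_self k
  obtain ⟨hkIcc, hkI⟩ := Finset.mem_sdiff.mp hkmem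
  rw [Finset.mem_Icc] at hkIcc
  -- k not in B
  have hknotB : ∀ p ∈ B, c p ≠ k := by
    intro p hp hpk
    apply hkI
    rw [hI, Finset.mem_image]
    exact ⟨p, Finset.mem_filter.mpr ⟨hp, by omega⟩, hpk⟩
  -- k in column
  have hkI' : k ∈ I' := by rw [hI'eq, Finset.mem_Icc]; omega
  rw [hI', Finset.mem_image] at hkI'
  obtain ⟨p, hpN', hpk⟩ := hkI'
  rw [hN'] at hpN'
  obtain ⟨hpB', _⟩ := Finset.mem_filter.mp hpN'
  have hpnotB : p ∉ B := fun h => hknotB p h hpk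
  rw [hB', mem_blk'] at hpB'
  rw [hB, mem_blk'] at hpnotB
  have hp1 : p.1 = a + 7 := by omega
  refine ⟨k, ⟨hkIcc.1, hkIcc.2, hknotB, ⟨p.2, Finset.mem_Icc.mpr ⟨hpB'.2.1, hpB'.2.2⟩, ?_⟩⟩, ?_⟩
  · have : (a+7, p.2) = p := Prod.ext hp1.symm rfl
    rw [this]; exact hpk
  · intro k' h2 h39 hnot
    have : k' ∈ Finset.Icc 2 39 \ I := by
      rw [Finset.mem_sdiff, Finset.mem_Icc]
      refine ⟨⟨h2, h39⟩, fun hkI' => ?_⟩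
      rw [hI, Finset.mem_image] at hkI'
      obtain ⟨p, hpN, hpk⟩ := hkI'
      exact hnot p (Finset.mem_filter.mp hpN).1 hpk
    rw [hk, Finset.mem_singleton] at this
    exact this
end
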